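/- (Translation and additivity reduction for multivariate Gaussians, used in Theorem 2) For v ∈ ℝ^d and σ > 0, q ∈ [0,1], integer α > 1: D_α( N(0,σ²I_d) ‖ (1−q)N(0,σ²I_d) + q·N(v,σ²I_d) ) = D_α( N(0,σ²) ‖ (1−q)N(0,σ²) + q·N(‖v‖₂,σ²) ), i.e., the d-dimensional divergence reduces to one dimension depending only on ‖v‖₂. -/

import Mathlib

open Real

/-- The `d`-dimensional isotropic Gaussian density `N(m, σ²I_d)`. -/
noncomputable def gaussPdfD (d : ℕ) (σ : ℝ) (m x : EuclideanSpace ℝ (Fin d)) : ℝ :=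
  (1 / (σ * Real.sqrt (2 * π)) ^ d) * Real.exp (-‖x - m‖ ^ 2 / (2 * σ ^ 2))

/-- The one-dimensional Gaussian density `N(m, σ²)`. -/
noncomputable def gaussPdf1 (σ m x : ℝ) : ℝ :=
  (1 / (σ * Real.sqrt (2 * π))) * Real.exp (-(x - m) ^ 2 / (2 * σ ^ 2))


lemma gaussPdf1_pos {σ : ℝ} (hσ : 0 < σ) (m x : ℝ) : 0 < gaussPdf1 σ m x := by
  unfold gaussPdf1
  have h2π : 0 < Real.sqrt (2 * π) := Real.sqrt_pos.2 (by positivity)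
  positivity

lemma integral_gaussPdf1 {σ : ℝ} (hσ : 0 < σ) : ∫ x : ℝ, gaussPdf1 σ 0 x = 1 := by
  unfold gaussPdf1
  have h1 : ∀ x : ℝ, -(x - 0) ^ 2 / (2 * σ ^ 2) = -(1 / (2 * σ ^ 2)) * x ^ 2 := by
    intro x; field_simp; ring
  simp_rw [h1]
  rw [MeasureTheory.integral_const_mul, integral_gaussian]
  have h2 : π / (1 / (2 * σ ^ 2)) = (2 * π) * σ ^ 2 := by field_simp
  rw [h2, Real.sqrt_mul (show (0:ℝ) ≤ 2 * π by positivity) (σ ^ 2), Real.sqrt_sq hσ.le]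
  have h2π : 0 < Real.sqrt (2 * π) := Real.sqrt_pos.2 (by positivity)
  field_simp

lemma gaussPdfD_eq_prod (d : ℕ) {σ : ℝ} (hσ : 0 < σ) (m x : EuclideanSpace ℝ (Fin d)) :
    gaussPdfD d σ m x = ∏ i, gaussPdf1 σ (m i) (x i) := by
  unfold gaussPdfD gaussPdf1
  rw [Finset.prod_mul_distrib, Finset.prod_const, ← Real.exp_sum]
  congr 1
  · rw [Finset.card_univ, Fintype.card_fin, one_div, one_div, inv_pow]
  · have hn : ‖x - m‖ ^ 2 = ∑ i, (x i - m i) ^ 2 := by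
      rw [EuclideanSpace.norm_eq, Real.sq_sqrt (by positivity)]
      simp [Real.norm_eq_abs, sq_abs]
    rw [hn, ← Finset.sum_neg_distrib, Finset.sum_div]

/-- Translation and additivity reduction for multivariate Gaussians (used in Theorem 2):
`D_α( N(0,σ²I_d) ‖ (1−q)N(0,σ²I_d) + q·N(v,σ²I_d) )` equals the one-dimensional
divergence `D_α( N(0,σ²) ‖ (1−q)N(0,σ²) + q·N(‖v‖₂,σ²) )`. -/
theorem stmt_19 (d : ℕ) (hd : 1 ≤ d) (σ : ℝ) (hσ : 0 < σ)
    (v : EuclideanSpace ℝ (Fin d)) (q : ℝ) (hq0 : 0 ≤ q) (hq1 : q ≤ 1)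
    (α : ℕ) (hα : 1 < α) :
    (1 / ((α : ℝ) - 1)) *
        Real.log (∫ x : EuclideanSpace ℝ (Fin d),
          gaussPdfD d σ 0 x ^ (α : ℝ) *
            ((1 - q) * gaussPdfD d σ 0 x + q * gaussPdfD d σ v x) ^ (1 - (α : ℝ)))
      = (1 / ((α : ℝ) - 1)) *
          Real.log (∫ x : ℝ,
            gaussPdf1 σ 0 x ^ (α : ℝ) *
              ((1 - q) * gaussPdf1 σ 0 x + q * gaussPdf1 σ ‖v‖ x) ^ (1 - (α : ℝ))) := by
  congr 2
  set i0 : Fin d := ⟨0, hd⟩ with hi0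
  set w : EuclideanSpace ℝ (Fin d) := ‖v‖ • EuclideanSpace.single i0 1 with hwdef
  have hwnorm : ‖w‖ = ‖v‖ := by
    rw [hwdef, norm_smul, EuclideanSpace.norm_single, norm_one, mul_one, Real.norm_eq_abs,
      abs_norm]
  have hw0 : w i0 = ‖v‖ := by simp [hwdef, EuclideanSpace.single_apply]
  have hwi : ∀ i, i ≠ i0 → w i = 0 := by
    intro i hi; simp [hwdef, EuclideanSpace.single_apply, hi]
  set e := Submodule.reflection (ℝ ∙ (v - w))ᗮ with hedef
  have hev : e v = w := Submodule.reflection_sub hwnorm.symm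
  have hew : e w = v := by rw [← hev, hedef, Submodule.reflection_reflection]
  -- step 1: change of variables
  have hcv :
      (∫ x : EuclideanSpace ℝ (Fin d),
        gaussPdfD d σ 0 x ^ (α : ℝ) *
          ((1 - q) * gaussPdfD d σ 0 x + q * gaussPdfD d σ v x) ^ (1 - (α : ℝ)))
      = ∫ x : EuclideanSpace ℝ (Fin d),
        gaussPdfD d σ 0 x ^ (α : ℝ) *
          ((1 - q) * gaussPdfD d σ 0 x + q * gaussPdfD d σ w x) ^ (1 - (α : ℝ)) := by
    rw [← e.measurePreserving.integral_comp e.toHomeomorph.measurableEmbedding]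
    refine MeasureTheory.integral_congr_ae (Filter.Eventually.of_forall fun x => ?_)
    have h0 : gaussPdfD d σ 0 (e x) = gaussPdfD d σ 0 x := by
      unfold gaussPdfD; rw [sub_zero, sub_zero, e.norm_map]
    have hv : gaussPdfD d σ v (e x) = gaussPdfD d σ w x := by
      unfold gaussPdfD
      rw [show e x - v = e (x - w) by rw [map_sub, hew], e.norm_map]
    simp only [h0, hv]
  rw [hcv]
  classical
  set f : Fin d → ℝ → ℝ := fun i t =>
    if i = i0 then
      gaussPdf1 σ 0 t ^ (α : ℝ) *
        ((1 - q) * gaussPdf1 σ 0 t + q * gaussPdf1 σ ‖v‖ t) ^ (1 - (α : ℝ))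
    else gaussPdf1 σ 0 t with hf
  have hpoint : ∀ x : EuclideanSpace ℝ (Fin d),
      gaussPdfD d σ 0 x ^ (α : ℝ) *
        ((1 - q) * gaussPdfD d σ 0 x + q * gaussPdfD d σ w x) ^ (1 - (α : ℝ))
      = ∏ i, f i (x i) := by
    intro x
    have hQpos : 0 < ∏ i ∈ Finset.univ.erase i0, gaussPdf1 σ 0 (x i) :=
      Finset.prod_pos fun i _ => gaussPdf1_pos hσ _ _
    set Q := ∏ i ∈ Finset.univ.erase i0, gaussPdf1 σ 0 (x i) with hQ
    have h0x : gaussPdfD d σ 0 x = gaussPdf1 σ 0 (x i0) * Q := by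
      rw [gaussPdfD_eq_prod d hσ, ← Finset.mul_prod_erase Finset.univ _ (Finset.mem_univ i0)]
      simp [hQ]
    have hwx : gaussPdfD d σ w x = gaussPdf1 σ ‖v‖ (x i0) * Q := by
      rw [gaussPdfD_eq_prod d hσ, ← Finset.mul_prod_erase Finset.univ _ (Finset.mem_univ i0), hw0]
      congr 1
      exact Finset.prod_congr rfl fun i hi => by rw [hwi i (Finset.mem_erase.1 hi).1]
    have hg0 := gaussPdf1_pos hσ 0 (x i0)
    have hgv := gaussPdf1_pos hσ ‖v‖ (x i0)
    have hmix : 0 < (1 - q) * gaussPdf1 σ 0 (x i0) + q * gaussPdf1 σ ‖v‖ (x i0) := by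
      rcases lt_or_eq_of_le hq1 with h | h
      · nlinarith
      · subst h; simpa using hgv
    rw [h0x, hwx]
    have key : (1 - q) * (gaussPdf1 σ 0 (x i0) * Q) + q * (gaussPdf1 σ ‖v‖ (x i0) * Q)
        = ((1 - q) * gaussPdf1 σ 0 (x i0) + q * gaussPdf1 σ ‖v‖ (x i0)) * Q := by ring
    rw [key, Real.mul_rpow hg0.le hQpos.le, Real.mul_rpow hmix.le hQpos.le]
    have hQQ : Q ^ (α : ℝ) * Q ^ (1 - (α : ℝ)) = Q := by
      rw [← Real.rpow_add hQpos, show (α : ℝ) + (1 - (α : ℝ)) = 1 by ring, Real.rpow_one]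
    calc gaussPdf1 σ 0 (x i0) ^ (α:ℝ) * Q ^ (α:ℝ) *
          (((1-q) * gaussPdf1 σ 0 (x i0) + q * gaussPdf1 σ ‖v‖ (x i0)) ^ (1-(α:ℝ)) *
            Q ^ (1-(α:ℝ)))
        = (gaussPdf1 σ 0 (x i0) ^ (α:ℝ) *
            ((1-q) * gaussPdf1 σ 0 (x i0) + q * gaussPdf1 σ ‖v‖ (x i0)) ^ (1-(α:ℝ))) *
            (Q ^ (α:ℝ) * Q ^ (1-(α:ℝ))) := by ring
      _ = f i0 (x i0) * Q := by rw [hQQ]; simp [hf]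
      _ = ∏ i, f i (x i) := by
          rw [← Finset.mul_prod_erase Finset.univ (fun i => f i (x i)) (Finset.mem_univ i0)]
          congr 1
          exact (Finset.prod_congr rfl fun i hi => by
            simp [hf, (Finset.mem_erase.1 hi).1]).symm
  simp_rw [hpoint]
  have hpi : (∫ x : EuclideanSpace ℝ (Fin d), ∏ i, f i (x i)) = ∏ i, ∫ t : ℝ, f i t := by
    rw [← MeasureTheory.integral_fintype_prod_eq_prod (ι := Fin d) f]
    exact ((MeasureTheory.MeasurePreserving.symm _
      (EuclideanSpace.volume_preserving_symm_measurableEquiv_toLp (Fin d))).integral_comp'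
      (fun x => ∏ i, f i (x i))).symm
  rw [hpi, ← Finset.mul_prod_erase Finset.univ _ (Finset.mem_univ i0)]
  have h1 : ∀ i ∈ Finset.univ.erase i0, (∫ t : ℝ, f i t) = 1 := by
    intro i hi
    have hfe : f i = gaussPdf1 σ 0 := by funext t; simp [hf, (Finset.mem_erase.1 hi).1]
    rw [hfe, integral_gaussPdf1 hσ]
  rw [Finset.prod_congr rfl h1, Finset.prod_const_one, mul_one]
  simp [hf]
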